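/- arXiv:2103.16661 — 3 statements merged into one kernel-verified Lean document; each statement's English description precedes it below -/
import Mathlib

section
/- For every v ∈ ℝ with u = √(1+v²), the determinant of A(v) equals 2v² − 1. Moreover, if v > 1/√2 then A(v) is positive definite, while if 0 < v < 1/√2 then A(v) has one positive and one negative eigenvalue; consequently the shock formed by ψ₋ (with v₋² > 1/2) and ψ₊ (with v₊² < 1/2) is a Lax 1-shock. -/
open Real Matrix Filter Topology Set

noncomputable section

/-- The state space condition `ψ⁰ > |ψ¹|`. -/
def StateSpace (ψ : Fin 2 → ℝ) : Prop := |ψ 1| < ψ 0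

/-- Temperature variable `θ(ψ) = ((ψ⁰)² − (ψ¹)²)^(−1/2)`. -/
def θf (ψ : Fin 2 → ℝ) : ℝ := (Real.sqrt ((ψ 0) ^ 2 - (ψ 1) ^ 2))⁻¹

/-- `u(ψ) = θ(ψ) ψ⁰`. -/
def uf (ψ : Fin 2 → ℝ) : ℝ := θf ψ * ψ 0

/-- `v(ψ) = θ(ψ) ψ¹`. -/
def vf (ψ : Fin 2 → ℝ) : ℝ := θf ψ * ψ 1

/-- Ideal stress component `T⁰¹`. -/
def T01 (ψ : Fin 2 → ℝ) : ℝ := (4 / 3) * (θf ψ) ^ 4 * uf ψ * vf ψ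

/-- Ideal stress component `T¹¹`. -/
def T11 (ψ : Fin 2 → ℝ) : ℝ := (θf ψ) ^ 4 * ((4 / 3) * (vf ψ) ^ 2 + 1 / 3)

/-- `u = √(1+v²)` as a function of the velocity `v`. -/
def uu (v : ℝ) : ℝ := Real.sqrt (1 + v ^ 2)

/-- Viscosity matrix `B̃_visc(v)`. -/
def Bvisc (v : ℝ) : Matrix (Fin 2) (Fin 2) ℝ :=
  !![(uu v) ^ 2 * v ^ 2, -((uu v) ^ 3 * v); -((uu v) ^ 3 * v), (uu v) ^ 4]

/-- Thermal regulator matrix `B_ther(v)`. -/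
def Bther (v : ℝ) : Matrix (Fin 2) (Fin 2) ℝ :=
  !![16 * (uu v) ^ 2 * v ^ 2, -(4 * uu v * v * (4 * v ^ 2 + 1));
     -(4 * uu v * v * (4 * v ^ 2 + 1)), (4 * v ^ 2 + 1) ^ 2]

/-- Velocity regulator matrix `B_velo(v)`. -/
def Bvelo (v : ℝ) : Matrix (Fin 2) (Fin 2) ℝ :=
  !![((uu v) ^ 2 + v ^ 2) ^ 2, -(2 * ((uu v) ^ 2 + v ^ 2) * uu v * v);
     -(2 * ((uu v) ^ 2 + v ^ 2) * uu v * v), 4 * (uu v) ^ 2 * v ^ 2]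

/-- The full dissipation matrix `B(v) = η̃ B̃_visc − μ B_ther − ν B_velo`. -/
def Bmat (η μ ν v : ℝ) : Matrix (Fin 2) (Fin 2) ℝ :=
  η • Bvisc v - μ • Bther v - ν • Bvelo v

/-- The (rescaled) flux Jacobian `A(v)`. -/
def Amat (v : ℝ) : Matrix (Fin 2) (Fin 2) ℝ :=
  !![v * (6 * (uu v) ^ 2 - 1), -(uu v * (6 * v ^ 2 + 1));
     -(uu v * (6 * v ^ 2 + 1)), v * (6 * v ^ 2 + 3)]

/-- Upstream velocity `v₋(q̃)`. -/
def vminus (q : ℝ) : ℝ :=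
  Real.sqrt (((2 * q - 1) + Real.sqrt (q * (4 * q - 3))) / (4 * (1 - q)))

/-- Downstream velocity `v₊(q̃)`. -/
def vplus (q : ℝ) : ℝ :=
  Real.sqrt (((2 * q - 1) - Real.sqrt (q * (4 * q - 3))) / (4 * (1 - q)))

/-- The state `ψ` with velocity `v` on the Hugoniot curve `T¹¹ = 1`. -/
def psiOf (v : ℝ) : Fin 2 → ℝ :=
  ((4 / 3) * v ^ 2 + 1 / 3) ^ ((1 : ℝ) / 4) • ![Real.sqrt (1 + v ^ 2), v]

/-- Upstream state `ψ₋(q̃)`. -/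
def psiMinus (q : ℝ) : Fin 2 → ℝ := psiOf (vminus q)

/-- Downstream state `ψ₊(q̃)`. -/
def psiPlus (q : ℝ) : Fin 2 → ℝ := psiOf (vplus q)

/-- `ψ : ℝ → Ψ` is a C¹ solution of the profile ODE
`B(v(ψ))·ψ' = (T⁰¹(ψ) − q̃^(−1/2), T¹¹(ψ) − 1)`. -/
def ProfileSolution (η μ ν q : ℝ) (ψ : ℝ → Fin 2 → ℝ) : Prop :=
  ContDiff ℝ 1 ψ ∧ (∀ t, StateSpace (ψ t)) ∧
  ∀ t, (Bmat η μ ν (vf (ψ t))).mulVec (deriv ψ t) =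
    ![T01 (ψ t) - (Real.sqrt q)⁻¹, T11 (ψ t) - 1]

end

/-! A real symmetric `2 × 2` matrix is classified by the signs of the product and the sum of its
two eigenvalues, i.e. of its determinant and trace. For `A(v)` the determinant is `2v² − 1` and
the trace `4v(3v² + 2)`, so `A(v)` is positive definite above the sonic speed `v = 1/√2` and
indefinite below it. On the Hugoniot curve, `v₋² − 1/2` and `1/2 − v₊²` have the signs of
`√(q(4q − 3)) ± (4q − 3)`, which are positive for `3/4 < q < 1`. -/

namespace Matrix

variable {A : Matrix (Fin 2) (Fin 2) ℝ}

lemma IsHermitian.det_eq_mul_eigenvalues (hA : A.IsHermitian) :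
    A.det = hA.eigenvalues 0 * hA.eigenvalues 1 := by
  simpa [Fin.prod_univ_two] using hA.det_eq_prod_eigenvalues

lemma IsHermitian.trace_eq_add_eigenvalues (hA : A.IsHermitian) :
    A.trace = hA.eigenvalues 0 + hA.eigenvalues 1 := by
  simpa [Fin.sum_univ_two] using hA.trace_eq_sum_eigenvalues

lemma IsHermitian.posDef_of_det_pos_of_trace_pos (hA : A.IsHermitian) (hdet : 0 < A.det)
    (htr : 0 < A.trace) : A.PosDef := by
  rw [hA.det_eq_mul_eigenvalues] at hdet
  rw [hA.trace_eq_add_eigenvalues] at htr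
  rcases pos_and_pos_or_neg_and_neg_of_mul_pos hdet with ⟨h0, h1⟩ | ⟨h0, h1⟩
  · exact hA.posDef_iff_eigenvalues_pos.mpr (Fin.forall_fin_two.mpr ⟨h0, h1⟩)
  · linarith

lemma IsHermitian.exists_eigenvector_pos_neg_of_det_neg (hA : A.IsHermitian)
    (hdet : A.det < 0) :
    ∃ (a b : ℝ) (x y : Fin 2 → ℝ), x ≠ 0 ∧ y ≠ 0 ∧
      A *ᵥ x = a • x ∧ A *ᵥ y = b • y ∧ 0 < a ∧ b < 0 := by
  have hvec (i : Fin 2) : ⇑(hA.eigenvectorBasis i) ≠ 0 := by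
    simpa using hA.eigenvectorBasis.orthonormal.ne_zero i
  rw [hA.det_eq_mul_eigenvalues] at hdet
  rcases mul_neg_iff.mp hdet with ⟨h0, h1⟩ | ⟨h0, h1⟩
  · exact ⟨_, _, _, _, hvec 0, hvec 1, hA.mulVec_eigenvectorBasis 0,
      hA.mulVec_eigenvectorBasis 1, h0, h1⟩
  · exact ⟨_, _, _, _, hvec 1, hvec 0, hA.mulVec_eigenvectorBasis 1,
      hA.mulVec_eigenvectorBasis 0, h1, h0⟩

end Matrix

lemma inv_sqrt_two_eq_sqrt_half : (√2)⁻¹ = √(1 / 2) := by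
  rw [one_div, Real.sqrt_inv]

lemma uu_sq (v : ℝ) : uu v ^ 2 = 1 + v ^ 2 :=
  Real.sq_sqrt (by positivity)

lemma isHermitian_Amat (v : ℝ) : (Amat v).IsHermitian := by
  ext i j
  fin_cases i <;> fin_cases j <;> simp [Amat]

lemma det_Amat (v : ℝ) : (Amat v).det = 2 * v ^ 2 - 1 := by
  rw [Amat, det_fin_two_of]
  linear_combination (6 * v ^ 2 - 1) * uu_sq v

lemma trace_Amat (v : ℝ) : (Amat v).trace = 4 * v * (3 * v ^ 2 + 2) := by
  rw [Amat, trace_fin_two_of]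
  linear_combination 6 * v * uu_sq v

lemma posDef_Amat {v : ℝ} (hv : (√2)⁻¹ < v) : (Amat v).PosDef := by
  have hv0 : 0 < v := lt_trans (by positivity) hv
  rw [inv_sqrt_two_eq_sqrt_half, Real.sqrt_lt' hv0] at hv
  refine (isHermitian_Amat v).posDef_of_det_pos_of_trace_pos ?_ ?_
  · rw [det_Amat]
    linarith
  · rw [trace_Amat]
    positivity

lemma exists_eigenvector_pos_neg_Amat {v : ℝ} (hv0 : 0 ≤ v) (hv : v < (√2)⁻¹) :
    ∃ (a b : ℝ) (x y : Fin 2 → ℝ), x ≠ 0 ∧ y ≠ 0 ∧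
      (Amat v).mulVec x = a • x ∧ (Amat v).mulVec y = b • y ∧ 0 < a ∧ b < 0 := by
  rw [inv_sqrt_two_eq_sqrt_half, Real.lt_sqrt hv0] at hv
  refine (isHermitian_Amat v).exists_eigenvector_pos_neg_of_det_neg ?_
  rw [det_Amat]
  linarith

section Hugoniot

variable {q : ℝ}

lemma inv_sqrt_two_lt_vminus (hq : q ∈ Ioo (3 / 4 : ℝ) 1) : (√2)⁻¹ < vminus q := by
  obtain ⟨hq₁, hq₂⟩ := hq
  rw [inv_sqrt_two_eq_sqrt_half, vminus, Real.sqrt_lt_sqrt_iff (by norm_num),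
    lt_div_iff₀ (by linarith)]
  linarith [Real.sqrt_nonneg (q * (4 * q - 3))]

lemma vplus_pos (hq : q ∈ Ioo (3 / 4 : ℝ) 1) : 0 < vplus q := by
  obtain ⟨hq₁, hq₂⟩ := hq
  have hd : √(q * (4 * q - 3)) < 2 * q - 1 := by
    rw [Real.sqrt_lt' (by linarith)]
    nlinarith
  exact Real.sqrt_pos.mpr (div_pos (by linarith) (by linarith))

lemma vplus_lt_inv_sqrt_two (hq : q ∈ Ioo (3 / 4 : ℝ) 1) : vplus q < (√2)⁻¹ := by
  obtain ⟨hq₁, hq₂⟩ := hq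
  have hd : 4 * q - 3 < √(q * (4 * q - 3)) := by
    rw [Real.lt_sqrt (by linarith)]
    nlinarith
  rw [inv_sqrt_two_eq_sqrt_half, vplus, Real.sqrt_lt_sqrt_iff_of_pos (by norm_num),
    div_lt_iff₀ (by linarith)]
  linarith

end Hugoniot

/-- `det A(v) = 2v² − 1`; `A(v)` is positive definite for `v > 1/√2` and has one
positive and one negative eigenvalue for `0 < v < 1/√2`; consequently the shock
formed by `ψ₋` and `ψ₊` is a Lax 1-shock. -/
theorem det_A_and_Lax_shock :
    (∀ v : ℝ, (Amat v).det = 2 * v ^ 2 - 1) ∧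
    (∀ v : ℝ, (Real.sqrt 2)⁻¹ < v → (Amat v).PosDef) ∧
    (∀ v : ℝ, 0 < v → v < (Real.sqrt 2)⁻¹ →
      ∃ (a b : ℝ) (x y : Fin 2 → ℝ), x ≠ 0 ∧ y ≠ 0 ∧
        (Amat v).mulVec x = a • x ∧ (Amat v).mulVec y = b • y ∧ 0 < a ∧ b < 0) ∧
    (∀ q ∈ Set.Ioo (3 / 4 : ℝ) 1,
      (Amat (vminus q)).PosDef ∧
      ∃ (a b : ℝ) (x y : Fin 2 → ℝ), x ≠ 0 ∧ y ≠ 0 ∧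
        (Amat (vplus q)).mulVec x = a • x ∧ (Amat (vplus q)).mulVec y = b • y ∧
        0 < a ∧ b < 0) :=
  ⟨det_Amat, fun _ => posDef_Amat, fun _ hv0 hv => exists_eigenvector_pos_neg_Amat hv0.le hv,
    fun _ hq => ⟨posDef_Amat (inv_sqrt_two_lt_vminus hq),
      exists_eigenvector_pos_neg_Amat (vplus_pos hq).le (vplus_lt_inv_sqrt_two hq)⟩⟩
end

section
/- If μ ≥ η̃ > 0 and ν > 9η̃μ/(4μ−η̃), then there exists q̃₀ ∈ (3/4, 1) such that for all q̃ ∈ (q̃₀, 1) one has det B(v₋(q̃)) > 0. (Key step of Lemma 2(i).) -/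
open Real Matrix Filter Topology Set

/-!
`det B(v)` is a quadratic polynomial in `v²` whose leading coefficient `(4μ − η̃)ν − 9η̃μ` is
positive exactly in the strictly causal case, and whose constant term `ν(μ − η̃)` is nonnegative.
Since `v₋(q̃)² ≥ 1/(8(1 − q̃))` blows up as `q̃ → 1`, the leading term eventually dominates.
-/

lemma det_Bmat (η μ ν v : ℝ) :
    (Bmat η μ ν v).det =
      (4 * μ * ν - η * ν - 9 * η * μ) * (v ^ 2) ^ 2
        - (9 * η * μ + 2 * η * ν + 4 * μ * ν) * v ^ 2 + ν * (μ - η) := by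
  have hu : uu v ^ 2 = 1 + v ^ 2 := sq_sqrt (by positivity)
  -- Every entry is even in `u` except the off-diagonal one, which is `u v` times an even one.
  have hdet : (Bmat η μ ν v).det =
      (η * uu v ^ 2 * v ^ 2 - 16 * μ * uu v ^ 2 * v ^ 2 - ν * (uu v ^ 2 + v ^ 2) ^ 2)
        * (η * (uu v ^ 2) ^ 2 - μ * (4 * v ^ 2 + 1) ^ 2 - 4 * ν * uu v ^ 2 * v ^ 2)
      - uu v ^ 2 * v ^ 2
        * (-(η * uu v ^ 2) + 4 * μ * (4 * v ^ 2 + 1) + 2 * ν * (uu v ^ 2 + v ^ 2)) ^ 2 := by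
    simp only [Bmat, Bvisc, Bther, Bvelo, det_fin_two, Matrix.sub_apply, Matrix.smul_apply,
      smul_eq_mul, of_apply, cons_val', cons_val_zero, cons_val_one, empty_val',
      cons_val_fin_one]
    ring
  rw [hdet, hu]
  ring

lemma quadratic_pos_of_lt_mul {a b c w : ℝ} (hc : 0 ≤ c) (hw : 0 < w) (hbw : b < a * w) :
    0 < a * w ^ 2 - b * w + c := by
  nlinarith [mul_pos hw (sub_pos.2 hbw)]

lemma one_div_le_vminus_sq {q : ℝ} (hq : 3 / 4 ≤ q) (hq1 : q < 1) :
    1 / (8 * (1 - q)) ≤ vminus q ^ 2 := by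
  have hs := sqrt_nonneg (q * (4 * q - 3))
  rw [vminus, sq_sqrt (div_nonneg (by linarith) (by linarith)),
    div_le_div_iff₀ (by linarith) (by linarith)]
  nlinarith

lemma lt_vminus_sq_of_near_one {W q : ℝ} (hW : 0 ≤ W) (hq : 1 - 1 / (8 * (W + 1)) < q) (hq1 : q < 1) :
    W < vminus q ^ 2 := by
  have hε : 1 / (8 * (W + 1)) ≤ 1 / 8 := by gcongr; linarith
  refine lt_of_lt_of_le ?_ (one_div_le_vminus_sq (by linarith) hq1)
  rw [lt_div_iff₀ (by linarith)]
  have := (lt_div_iff₀ (by linarith)).1 (show 1 - q < 1 / (8 * (W + 1)) by linarith)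
  nlinarith

/-- Key step of Lemma 2(i): in the strictly causal case `ν > 9η̃μ/(4μ−η̃)`,
`det B(v₋(q̃)) > 0` for all `q̃` sufficiently close to `1`. -/
theorem det_B_positive_near_one (η μ ν : ℝ) (hη : 0 < η) (hμ : η ≤ μ)
    (hν : 9 * η * μ / (4 * μ - η) < ν) :
    ∃ q₀ ∈ Set.Ioo (3 / 4 : ℝ) 1, ∀ q ∈ Set.Ioo q₀ 1,
      0 < (Bmat η μ ν (vminus q)).det := by
  have hμ0 : 0 < μ := hη.trans_le hμ
  have hμη : 0 < 4 * μ - η := by linarith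
  have hν0 : 0 < ν := lt_trans (div_pos (by positivity) hμη) hν
  have ha : 0 < 4 * μ * ν - η * ν - 9 * η * μ := by
    nlinarith [(div_lt_iff₀ hμη).1 hν]
  set W := (9 * η * μ + 2 * η * ν + 4 * μ * ν) / (4 * μ * ν - η * ν - 9 * η * μ)
  have hW : 0 ≤ W := div_nonneg (by positivity) ha.le
  have hε : 0 < 1 / (8 * (W + 1)) := by positivity
  have hε' : 1 / (8 * (W + 1)) ≤ 1 / 8 := by gcongr; linarith
  refine ⟨1 - 1 / (8 * (W + 1)), ⟨by linarith, by linarith⟩, fun q ⟨hq₀, hq1⟩ => ?_⟩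
  have hWv : W < vminus q ^ 2 := lt_vminus_sq_of_near_one hW hq₀ hq1
  rw [det_Bmat]
  exact quadratic_pos_of_lt_mul (by nlinarith) (hW.trans_lt hWv) ((div_lt_iff₀' ha).1 hWv)
end

section
/- At the bifurcation velocity v = 1/√2 (where u = √(3/2)): each of the matrices A(1/√2), B_ther(1/√2), B_velo(1/√2) has rank 1 and annihilates the vector r = (3, 2√3), i.e. A(1/√2)·r = B_ther(1/√2)·r = B_velo(1/√2)·r = 0; while B̃_visc(1/√2) = (3/4)·[[1, −√3],[−√3, 3]] has rank 1 with kernel spanned by (3, √3), which is not parallel to r. Consequently, for any η̃, μ, ν > 0, the matrix B(1/√2) = η̃·B̃_visc(1/√2) − μ·B_ther(1/√2) − ν·B_velo(1/√2) is invertible. -/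
/-! Each of `B̃_visc`, `B_ther`, `B_velo` is a Gram matrix `p pᵀ` of a single vector `p(v)`.
At `v = 1/√2` the vectors of `B_ther` and `B_velo` are both multiples of `q = (2, -√3)`, and `A`
is a multiple of `q qᵀ` too, so all three annihilate `r = (3, 2√3) ⊥ q`; the vector of `B̃_visc`
is `p = (√3/2, -3/2)`, orthogonal to `(3, √3)`. Hence `B(1/√2) = η p pᵀ - (3μ + ν) q qᵀ`, and the
determinant of such a combination of two rank-one Gram matrices in the plane is
`-η (3μ + ν) (p × q)² = -(9/4) η (3μ + ν) ≠ 0`. -/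

open Real Matrix Filter Topology Set

noncomputable section

namespace Matrix

variable {K : Type*} [Field K]

theorem rank_eq_zero_iff {m n : Type*} [Fintype n] {M : Matrix m n K} : M.rank = 0 ↔ M = 0 := by
  classical
  rw [rank, Submodule.finrank_eq_zero, LinearMap.range_eq_bot, ← toLin'_apply',
    LinearEquiv.map_eq_zero_iff]

variable {M : Matrix (Fin 2) (Fin 2) K} {k : Fin 2 → K}

theorem finrank_ker_mulVecLin_eq_one_of_fin_two (hM : M ≠ 0) (hk : k ≠ 0) (hMk : M *ᵥ k = 0) :
    Module.finrank K (LinearMap.ker M.mulVecLin) = 1 := by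
  have hrank : M.rank + Module.finrank K (LinearMap.ker M.mulVecLin) = 2 := by
    simpa [rank] using M.mulVecLin.finrank_range_add_finrank_ker
  have hker : Module.finrank K (LinearMap.ker M.mulVecLin) ≠ 0 := by
    rw [Ne, Submodule.finrank_eq_zero, Submodule.eq_bot_iff]
    exact fun h ↦ hk (h k hMk)
  have := rank_eq_zero_iff.not.mpr hM
  omega

theorem rank_eq_one_of_fin_two (hM : M ≠ 0) (hk : k ≠ 0) (hMk : M *ᵥ k = 0) : M.rank = 1 := by
  have := M.mulVecLin.finrank_range_add_finrank_ker
  rw [finrank_ker_mulVecLin_eq_one_of_fin_two hM hk hMk, Module.finrank_fin_fun] at this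
  exact Nat.add_right_cancel this

theorem mulVec_eq_zero_iff_exists_eq_smul_of_fin_two (hM : M ≠ 0) (hk : k ≠ 0)
    (hMk : M *ᵥ k = 0) (x : Fin 2 → K) : M *ᵥ x = 0 ↔ ∃ c : K, x = c • k := by
  constructor
  · intro hx
    obtain ⟨c, hc⟩ := (finrank_eq_one_iff_of_nonzero' (⟨k, hMk⟩ : LinearMap.ker M.mulVecLin)
      (Subtype.coe_ne_coe.mp hk)).mp (finrank_ker_mulVecLin_eq_one_of_fin_two hM hk hMk) ⟨x, hx⟩
    exact ⟨c, congrArg Subtype.val hc.symm⟩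
  · rintro ⟨c, rfl⟩
    rw [mulVec_smul, hMk, smul_zero]

theorem vecMulVec_mulVec_eq_zero {R m n : Type*} [CommRing R] [IsDomain R] [Fintype n]
    {u : m → R} {v x : n → R} (hu : u ≠ 0) : vecMulVec u v *ᵥ x = 0 ↔ v ⬝ᵥ x = 0 := by
  rw [vecMulVec_mulVec, op_smul_eq_smul, smul_eq_zero, or_iff_left hu]

theorem det_fin_two_smul_vecMulVec_add_smul_vecMulVec {R : Type*} [CommRing R] (a b : R)
    (p q : Fin 2 → R) :
    (a • vecMulVec p p + b • vecMulVec q q).det = a * b * (p 0 * q 1 - p 1 * q 0) ^ 2 := by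
  simp only [det_fin_two, add_apply, smul_apply, vecMulVec_apply, smul_eq_mul]
  ring

end Matrix

theorem Bvisc_eq_vecMulVec (v : ℝ) :
    Bvisc v = vecMulVec ![uu v * v, -uu v ^ 2] ![uu v * v, -uu v ^ 2] := by
  ext i j; fin_cases i <;> fin_cases j <;> simp [Bvisc, vecMulVec_apply] <;> ring

theorem Bther_eq_vecMulVec (v : ℝ) :
    Bther v = vecMulVec ![4 * uu v * v, -(4 * v ^ 2 + 1)] ![4 * uu v * v, -(4 * v ^ 2 + 1)] := by
  ext i j; fin_cases i <;> fin_cases j <;> simp [Bther, vecMulVec_apply] <;> ring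

theorem Bvelo_eq_vecMulVec (v : ℝ) :
    Bvelo v = vecMulVec ![uu v ^ 2 + v ^ 2, -(2 * uu v * v)]
      ![uu v ^ 2 + v ^ 2, -(2 * uu v * v)] := by
  ext i j; fin_cases i <;> fin_cases j <;> simp [Bvelo, vecMulVec_apply] <;> ring

section Bifurcation

local notation "v⋆" => (√2)⁻¹

theorem inv_sqrt_two_sq : v⋆ ^ 2 = 1 / 2 := by
  rw [inv_pow, sq_sqrt zero_le_two, one_div]

theorem uu_inv_sqrt_two : uu v⋆ = √3 * v⋆ := by
  rw [uu, inv_pow, sq_sqrt zero_le_two, ← sqrt_inv, ← sqrt_mul zero_le_three]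
  norm_num

theorem uu_inv_sqrt_two_sq : uu v⋆ ^ 2 = 3 / 2 := by
  rw [uu, sq_sqrt (by positivity), inv_sqrt_two_sq]
  norm_num

theorem uu_inv_sqrt_two_mul : uu v⋆ * v⋆ = √3 / 2 := by
  rw [uu_inv_sqrt_two, mul_assoc, ← sq, inv_sqrt_two_sq]
  ring

theorem Bvelo_inv_sqrt_two : Bvelo v⋆ = vecMulVec ![2, -√3] ![2, -√3] := by
  have h : (![uu v⋆ ^ 2 + v⋆ ^ 2, -(2 * uu v⋆ * v⋆)] : Fin 2 → ℝ) = ![2, -√3] := by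
    rw [uu_inv_sqrt_two_sq, inv_sqrt_two_sq, mul_assoc, uu_inv_sqrt_two_mul,
      mul_div_cancel₀ _ two_ne_zero]
    norm_num
  rw [Bvelo_eq_vecMulVec, h]

theorem Bther_inv_sqrt_two : Bther v⋆ = (3 : ℝ) • Bvelo v⋆ := by
  have h : (![4 * uu v⋆ * v⋆, -(4 * v⋆ ^ 2 + 1)] : Fin 2 → ℝ) = √3 • ![2, -√3] := by
    rw [mul_assoc, uu_inv_sqrt_two_mul, inv_sqrt_two_sq]
    ext i; fin_cases i <;> simp <;> ring
  rw [Bther_eq_vecMulVec, h, Bvelo_inv_sqrt_two, smul_vecMulVec, vecMulVec_smul, smul_smul,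
    mul_self_sqrt zero_le_three]

theorem Amat_inv_sqrt_two : Amat v⋆ = √2 • Bvelo v⋆ := by
  have h2 : √2 ^ 2 = 2 := sq_sqrt zero_le_two
  have h3 : √3 ^ 2 = 3 := sq_sqrt zero_le_three
  have h4 : √2 ^ 4 = 4 := by rw [show 4 = 2 * 2 from rfl, pow_mul, h2]; norm_num
  rw [Amat, Bvelo_inv_sqrt_two, uu_inv_sqrt_two]
  ext i j; fin_cases i <;> fin_cases j <;> simp <;> field_simp <;> norm_num [h2, h3, h4]

theorem Bvisc_inv_sqrt_two : Bvisc v⋆ = vecMulVec ![√3 / 2, -(3 / 2)] ![√3 / 2, -(3 / 2)] := by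
  rw [Bvisc_eq_vecMulVec, uu_inv_sqrt_two_mul, uu_inv_sqrt_two_sq]

theorem Bvelo_inv_sqrt_two_ne_zero : Bvelo v⋆ ≠ 0 := by
  rw [Bvelo_inv_sqrt_two, Ne, vecMulVec_eq_zero]
  simp

theorem Bvisc_inv_sqrt_two_ne_zero : Bvisc v⋆ ≠ 0 := by
  rw [Bvisc_inv_sqrt_two, Ne, vecMulVec_eq_zero]
  simp

theorem Bvelo_inv_sqrt_two_mulVec : Bvelo v⋆ *ᵥ ![3, 2 * √3] = 0 := by
  rw [Bvelo_inv_sqrt_two, vecMulVec_mulVec_eq_zero (by simp)]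
  simp only [cons_dotProduct_cons, dotProduct_of_isEmpty, add_zero]
  linear_combination (-2) * sq_sqrt (zero_le_three : (0 : ℝ) ≤ 3)

theorem Bvisc_inv_sqrt_two_mulVec : Bvisc v⋆ *ᵥ ![3, √3] = 0 := by
  rw [Bvisc_inv_sqrt_two, vecMulVec_mulVec_eq_zero (by simp)]
  simp only [cons_dotProduct_cons, dotProduct_of_isEmpty, add_zero]
  ring

theorem Bvisc_inv_sqrt_two_eq_smul : Bvisc v⋆ = (3 / 4 : ℝ) • !![1, -√3; -√3, 3] := by
  have h3 : √3 ^ 2 = 3 := sq_sqrt zero_le_three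
  rw [Bvisc_inv_sqrt_two]
  ext i j; fin_cases i <;> fin_cases j <;> simp [vecMulVec_apply] <;> linarith

theorem det_Bmat_inv_sqrt_two (η μ ν : ℝ) :
    (Bmat η μ ν v⋆).det = -(9 / 4 * η * (3 * μ + ν)) := by
  have hB : Bmat η μ ν v⋆ = η • vecMulVec ![√3 / 2, -(3 / 2)] ![√3 / 2, -(3 / 2)] +
      (-(3 * μ + ν)) • vecMulVec ![2, -√3] ![2, -√3] := by
    rw [Bmat, Bther_inv_sqrt_two, Bvisc_inv_sqrt_two, Bvelo_inv_sqrt_two, smul_smul]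
    module
  rw [hB, det_fin_two_smul_vecMulVec_add_smul_vecMulVec]
  simp only [cons_val_zero, cons_val_one]
  linear_combination (-(η * (3 * μ + ν)) * (√3 ^ 2 - 9) / 4) * sq_sqrt (zero_le_three : (0 : ℝ) ≤ 3)

end Bifurcation

/-- Structure of the matrices at the bifurcation point: `A`, `B_ther`, `B_velo` are
rank-one with common kernel vector `r = (3, 2√3)`, while `B̃_visc` is rank-one with
kernel spanned by `(3, √3)`, not parallel to `r`; consequently `B(1/√2)` is invertible
for all positive parameters. -/
theorem bifurcation_point_kernels :
    (Amat (Real.sqrt 2)⁻¹).rank = 1 ∧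
    (Bther (Real.sqrt 2)⁻¹).rank = 1 ∧
    (Bvelo (Real.sqrt 2)⁻¹).rank = 1 ∧
    (Amat (Real.sqrt 2)⁻¹).mulVec ![3, 2 * Real.sqrt 3] = 0 ∧
    (Bther (Real.sqrt 2)⁻¹).mulVec ![3, 2 * Real.sqrt 3] = 0 ∧
    (Bvelo (Real.sqrt 2)⁻¹).mulVec ![3, 2 * Real.sqrt 3] = 0 ∧
    Bvisc (Real.sqrt 2)⁻¹ = (3 / 4 : ℝ) • !![1, -Real.sqrt 3; -Real.sqrt 3, 3] ∧
    (Bvisc (Real.sqrt 2)⁻¹).rank = 1 ∧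
    (∀ x : Fin 2 → ℝ, (Bvisc (Real.sqrt 2)⁻¹).mulVec x = 0 ↔
      ∃ c : ℝ, x = c • ![3, Real.sqrt 3]) ∧
    (¬ ∃ c : ℝ, (![3, Real.sqrt 3] : Fin 2 → ℝ) = c • ![3, 2 * Real.sqrt 3]) ∧
    (∀ η μ ν : ℝ, 0 < η → 0 < μ → 0 < ν →
      IsUnit (Bmat η μ ν (Real.sqrt 2)⁻¹).det) := by
  have hr : (![3, 2 * √3] : Fin 2 → ℝ) ≠ 0 := by simp
  have hk : (![3, √3] : Fin 2 → ℝ) ≠ 0 := by simp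
  have hther : Bther (√2)⁻¹ *ᵥ ![3, 2 * √3] = 0 := by
    rw [Bther_inv_sqrt_two, smul_mulVec, Bvelo_inv_sqrt_two_mulVec, smul_zero]
  have hA : Amat (√2)⁻¹ *ᵥ ![3, 2 * √3] = 0 := by
    rw [Amat_inv_sqrt_two, smul_mulVec, Bvelo_inv_sqrt_two_mulVec, smul_zero]
  have hA_ne : Amat (√2)⁻¹ ≠ 0 := by
    rw [Amat_inv_sqrt_two]; exact smul_ne_zero (by positivity) Bvelo_inv_sqrt_two_ne_zero
  have hther_ne : Bther (√2)⁻¹ ≠ 0 := by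
    rw [Bther_inv_sqrt_two]; exact smul_ne_zero three_ne_zero Bvelo_inv_sqrt_two_ne_zero
  refine ⟨rank_eq_one_of_fin_two hA_ne hr hA, rank_eq_one_of_fin_two hther_ne hr hther,
    rank_eq_one_of_fin_two Bvelo_inv_sqrt_two_ne_zero hr Bvelo_inv_sqrt_two_mulVec, hA, hther,
    Bvelo_inv_sqrt_two_mulVec, Bvisc_inv_sqrt_two_eq_smul,
    rank_eq_one_of_fin_two Bvisc_inv_sqrt_two_ne_zero hk Bvisc_inv_sqrt_two_mulVec,
    mulVec_eq_zero_iff_exists_eq_smul_of_fin_two Bvisc_inv_sqrt_two_ne_zero hk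
      Bvisc_inv_sqrt_two_mulVec, ?_, fun η μ ν hη hμ hν ↦ ?_⟩
  · rintro ⟨c, hc⟩
    have hc0 : c = 1 := by simpa using congrFun hc 0
    have hc1 : √3 = c * (2 * √3) := by simpa using congrFun hc 1
    rw [hc0] at hc1
    linarith [sqrt_pos.mpr (zero_lt_three : (0 : ℝ) < 3)]
  · rw [det_Bmat_inv_sqrt_two, isUnit_iff_ne_zero, neg_ne_zero]
    positivity
end
end
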